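/- Let c ∈ (0,√2), p ∈ (0,1), ξ = p·c⁴/4, κ₁ = √((c² − √(c⁴ − 4ξ))/2), κ₂ = √((c² + √(c⁴ − 4ξ))/2). Then κ₂/κ₁ = √((1 + √(1−p))/(1 − √(1−p))), and for every natural number k ≥ 1, κ₂/κ₁ < k holds if and only if p > p_k := 1 − ((k² − 1)/(k² + 1))². -/

import Mathlib

open Real Filter Set

/-- `ξ = p c⁴ / 4`. -/
noncomputable def xiPar (c p : ℝ) : ℝ := p * c ^ 4 / 4

/-- `κ₁ = √((c² − √(c⁴ − 4ξ))/2)`. -/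
noncomputable def kappa1 (c p : ℝ) : ℝ :=
  Real.sqrt ((c ^ 2 - Real.sqrt (c ^ 4 - 4 * xiPar c p)) / 2)

/-- `κ₂ = √((c² + √(c⁴ − 4ξ))/2)`. -/
noncomputable def kappa2 (c p : ℝ) : ℝ :=
  Real.sqrt ((c ^ 2 + Real.sqrt (c ^ 4 - 4 * xiPar c p)) / 2)

/-- The function `L(c,p,θ)` from the paper. -/
noncomputable def Lfun (c p θ : ℝ) : ℝ :=
  (1 / 2) * (1 + kappa2 c p / kappa1 c p)
  + (1 / Real.pi) * Real.arctan
      ((kappa2 c p * (-(kappa1 c p) ^ 2 + xiPar c p + xiPar c p * θ * Real.sqrt (2 - c ^ 2))) /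
       (xiPar c p * (θ * (kappa1 c p) ^ 2 + Real.sqrt (2 - c ^ 2) + θ * (1 - c ^ 2))))
  - (kappa2 c p / (kappa1 c p * Real.pi)) * Real.arctan
      ((kappa1 c p * (-(kappa2 c p) ^ 2 + xiPar c p + xiPar c p * θ * Real.sqrt (2 - c ^ 2))) /
       (xiPar c p * (θ * (kappa2 c p) ^ 2 + Real.sqrt (2 - c ^ 2) + θ * (1 - c ^ 2))))

/-- The discontinuity point `θ₁ = −2√(2−c²)/(2−c² − c²√(1−p))`. -/
noncomputable def theta1 (c p : ℝ) : ℝ :=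
  -2 * Real.sqrt (2 - c ^ 2) / (2 - c ^ 2 - c ^ 2 * Real.sqrt (1 - p))

/-- The discontinuity point `θ₂ = −2√(2−c²)/(2−c² + c²√(1−p))`. -/
noncomputable def theta2 (c p : ℝ) : ℝ :=
  -2 * Real.sqrt (2 - c ^ 2) / (2 - c ^ 2 + c ^ 2 * Real.sqrt (1 - p))

/-- The threshold `p₀ = 4(c²−1)/c⁴`. -/
noncomputable def p0 (c : ℝ) : ℝ := 4 * (c ^ 2 - 1) / c ^ 4

/-!
Since `c⁴ − 4ξ = c⁴(1 − p)`, the frequencies are `κ₁,₂² = c²(1 ∓ s)/2` with `s = √(1 − p)`,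
so `c` cancels from `κ₂/κ₁ = √((1 + s)/(1 − s))`. The condition `κ₂/κ₁ < k` then unwinds to
`s < (k² − 1)/(k² + 1)`, and squaring gives `p > p_k`.
-/

lemma sqrt_sub_four_xiPar (c p : ℝ) :
    √(c ^ 4 - 4 * xiPar c p) = c ^ 2 * √(1 - p) := by
  have h : c ^ 4 - 4 * xiPar c p = (c ^ 2) ^ 2 * (1 - p) := by unfold xiPar; ring
  rw [h, Real.sqrt_mul (by positivity), Real.sqrt_sq (by positivity)]

lemma kappa1_eq (c p : ℝ) : kappa1 c p = √(c ^ 2 / 2 * (1 - √(1 - p))) := by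
  rw [kappa1, sqrt_sub_four_xiPar]
  ring_nf

lemma kappa2_eq (c p : ℝ) : kappa2 c p = √(c ^ 2 / 2 * (1 + √(1 - p))) := by
  rw [kappa2, sqrt_sub_four_xiPar]
  ring_nf

lemma kappa2_div_kappa1 {c : ℝ} (hc : c ≠ 0) (p : ℝ) :
    kappa2 c p / kappa1 c p = √((1 + √(1 - p)) / (1 - √(1 - p))) := by
  have hc2 : c ^ 2 / 2 ≠ 0 := by positivity
  rw [kappa1_eq, kappa2_eq, ← Real.sqrt_div (by positivity), mul_div_mul_left _ _ hc2]

lemma sqrt_one_add_div_one_sub_lt_iff {s k : ℝ} (hs : s < 1) (hk : 0 < k) :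
    √((1 + s) / (1 - s)) < k ↔ s < (k ^ 2 - 1) / (k ^ 2 + 1) := by
  rw [Real.sqrt_lt' hk, div_lt_iff₀ (by linarith), lt_div_iff₀ (by positivity)]
  constructor <;> intro h <;> linarith

lemma sqrt_one_sub_lt_iff {p r : ℝ} (hp : p ≤ 1) (hr : 0 ≤ r) :
    √(1 - p) < r ↔ 1 - r ^ 2 < p := by
  rw [Real.sqrt_lt (by linarith) hr]
  constructor <;> intro h <;> linarith

/-- For `c ∈ (0,√2)`, `p ∈ (0,1)`:
`κ₂/κ₁ = √((1 + √(1−p))/(1 − √(1−p)))`, and for every `k ∈ ℕ`, `k ≥ 1`,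
`κ₂/κ₁ < k ↔ p > p_k := 1 − ((k² − 1)/(k² + 1))²`. -/
theorem stmt14 (c p : ℝ) (hc : c ∈ Set.Ioo 0 (Real.sqrt 2)) (hp : p ∈ Set.Ioo 0 1) :
    kappa2 c p / kappa1 c p =
      Real.sqrt ((1 + Real.sqrt (1 - p)) / (1 - Real.sqrt (1 - p))) ∧
    ∀ k : ℕ, 1 ≤ k →
      (kappa2 c p / kappa1 c p < (k : ℝ) ↔
        p > 1 - (((k : ℝ) ^ 2 - 1) / ((k : ℝ) ^ 2 + 1)) ^ 2) := by
  have hratio := kappa2_div_kappa1 hc.1.ne' p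
  refine ⟨hratio, fun k hk => ?_⟩
  have hk1 : (1 : ℝ) ≤ k := by exact_mod_cast hk
  have hs : √(1 - p) < 1 := (Real.sqrt_lt' one_pos).mpr (by linarith [hp.1])
  have hr : 0 ≤ ((k : ℝ) ^ 2 - 1) / ((k : ℝ) ^ 2 + 1) :=
    div_nonneg (by nlinarith) (by positivity)
  rw [hratio, sqrt_one_add_div_one_sub_lt_iff hs (by linarith), sqrt_one_sub_lt_iff hp.2.le hr]
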